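/- arXiv:1304.2335 — 6 statements merged into one kernel-verified Lean document; each statement's English description precedes it below -/
import Mathlib

section
/- Every strongly extension-closed class of objects in a triangulated category (closed under countable coproducts) is extension-closed: for any distinguished triangle A → B → C with A and C in the class, B also lies in the class. -/
open CategoryTheory CategoryTheory.Limits CategoryTheory.Pretriangulated ZeroObject

universe v u

variable {C : Type u} [Category.{v} C] [Preadditive C] [HasZeroObject C]
  [HasShift C ℤ] [∀ n : ℤ, (shiftFunctor C n).Additive] [Pretriangulated C]

/-- The map `⊕ 1 − ⊕ φᵢ : ∐ Yᵢ ⟶ ∐ Yᵢ` whose cone is the homotopy colimit. -/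
noncomputable def hocolimMap (Y : ℕ → C) (φ : ∀ i, Y i ⟶ Y (i + 1)) [HasCoproduct Y] :
    (∐ Y) ⟶ ∐ Y :=
  Sigma.desc fun i => Sigma.ι Y i - φ i ≫ Sigma.ι Y (i + 1)

/-- `H` is a homotopy colimit of the sequence `(Y, φ)` if it is a cone of `hocolimMap Y φ`. -/
def IsHocolim (Y : ℕ → C) (φ : ∀ i, Y i ⟶ Y (i + 1)) [HasCoproduct Y] (H : C) : Prop :=
  ∃ (ι' : (∐ Y) ⟶ H) (π : H ⟶ (∐ Y)⟦(1 : ℤ)⟧),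
    Triangle.mk (hocolimMap Y φ) ι' π ∈ distTriang C

/-- `Z` is a cone of the morphism `f`. -/
def IsConeOf {A B : C} (f : A ⟶ B) (Z : C) : Prop :=
  ∃ (g : B ⟶ Z) (h : Z ⟶ A⟦(1 : ℤ)⟧), Triangle.mk f g h ∈ distTriang C

/-- A class of objects is extension-closed if it contains `0` and is closed under
extensions in distinguished triangles. -/
def IsExtClosed (P : Set C) : Prop :=
  (0 : C) ∈ P ∧
    ∀ T : Triangle C, (T ∈ distTriang C) → T.obj₁ ∈ P → T.obj₃ ∈ P → T.obj₂ ∈ P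

/-- A class of objects is strongly extension-closed if it contains `0` and contains all
homotopy colimits of sequences whose first term and all cones of connecting maps lie
in the class. -/
def IsStronglyExtClosed [HasCountableCoproducts C] (P : Set C) : Prop :=
  (0 : C) ∈ P ∧
    ∀ (Y : ℕ → C) (φ : ∀ i, Y i ⟶ Y (i + 1)) (H : C), IsHocolim Y φ H →
      Y 0 ∈ P → (∀ i, ∃ Z, IsConeOf (φ i) Z ∧ Z ∈ P) → H ∈ P

/-!
For a distinguished triangle `A ⟶ B ⟶ C ⟶ A⟦1⟧`, the object `B` is a homotopy colimit of
`A ⟶ B ⟶ B ⟶ ⋯` (maps `f`, `𝟙`, `𝟙`, …), whose cones are `C, 0, 0, …`. Indeed, `1 − shift` on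
`∐ Yᵢ` is a split monomorphism with cokernel `B`: writing `ιA, ιB₀, ιB₁, …` for the coprojections,
a retraction is `ιA ↦ ιA`, `ιBₙ ↦ -(ιB₀ + ⋯ + ιBₙ₋₁)` (the shift telescopes), and the cokernel is
`ιA ↦ f`, `ιBₙ ↦ 𝟙`. So the homotopy colimit triangle is the split triangle `∐ Yᵢ ⟶ ∐ Yᵢ ⊞ B ⟶ B`.
-/

section StationarySeq

variable {D : Type*} [Category D] {A B : D}

def stationarySeq (A B : D) : ℕ → D
  | 0 => A
  | _ + 1 => B

def stationarySeqMap (f : A ⟶ B) : ∀ i, stationarySeq A B i ⟶ stationarySeq A B (i + 1)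
  | 0 => f
  | _ + 1 => 𝟙 B

variable [HasCoproduct (stationarySeq A B)]

noncomputable def stationarySeqιA : A ⟶ ∐ stationarySeq A B :=
  Sigma.ι (stationarySeq A B) 0

noncomputable def stationarySeqιB (n : ℕ) : B ⟶ ∐ stationarySeq A B :=
  Sigma.ι (stationarySeq A B) (n + 1)

local notation "ιA" => stationarySeqιA (A := A) (B := B)
local notation "ιB" => stationarySeqιB (A := A) (B := B)

lemma stationarySeq_hom_ext {Z : D} {g h : (∐ stationarySeq A B) ⟶ Z}
    (h₀ : ιA ≫ g = ιA ≫ h) (h₁ : ∀ n, ιB n ≫ g = ιB n ≫ h) : g = h :=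
  Sigma.hom_ext _ _ fun
    | 0 => h₀
    | n + 1 => h₁ n

noncomputable def stationarySeqDesc (f : A ⟶ B) : (∐ stationarySeq A B) ⟶ B :=
  Sigma.desc (stationarySeqMap f)

lemma ιA_stationarySeqDesc (f : A ⟶ B) : ιA ≫ stationarySeqDesc f = f :=
  Sigma.ι_desc _ _

lemma ιB_stationarySeqDesc (f : A ⟶ B) (n : ℕ) : ιB n ≫ stationarySeqDesc f = 𝟙 B :=
  Sigma.ι_desc _ _

variable [Preadditive D]

lemma ιA_hocolimMap (f : A ⟶ B) :
    ιA ≫ hocolimMap _ (stationarySeqMap f) = ιA - f ≫ ιB 0 :=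
  Sigma.ι_desc _ _

lemma ιB_hocolimMap (f : A ⟶ B) (n : ℕ) :
    ιB n ≫ hocolimMap _ (stationarySeqMap f) = ιB n - ιB (n + 1) :=
  (Sigma.ι_desc _ _).trans
    (congrArg (fun g : B ⟶ ∐ stationarySeq A B => ιB n - g) (Category.id_comp (ιB (n + 1))))

lemma sum_ιB_comp_hocolimMap (f : A ⟶ B) (n : ℕ) :
    (∑ j ∈ Finset.range n, ιB j) ≫ hocolimMap _ (stationarySeqMap f) = ιB 0 - ιB n := by
  simp only [Preadditive.sum_comp, ιB_hocolimMap]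
  exact Finset.sum_range_sub' _ n

noncomputable def stationarySeqRetraction : (∐ stationarySeq A B) ⟶ ∐ stationarySeq A B :=
  Sigma.desc fun
    | 0 => ιA
    | n + 1 => -∑ j ∈ Finset.range n, ιB j

lemma ιA_stationarySeqRetraction : ιA ≫ stationarySeqRetraction = ιA :=
  Sigma.ι_desc _ _

lemma ιB_stationarySeqRetraction (n : ℕ) :
    ιB n ≫ stationarySeqRetraction = -∑ j ∈ Finset.range n, ιB j :=
  Sigma.ι_desc _ _

lemma hocolimMap_comp_stationarySeqRetraction (f : A ⟶ B) :
    hocolimMap _ (stationarySeqMap f) ≫ stationarySeqRetraction = 𝟙 _ :=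
  stationarySeq_hom_ext
    (by simp [reassoc_of% ιA_hocolimMap, ιA_stationarySeqRetraction, ιB_stationarySeqRetraction])
    (fun n => by
      simp [reassoc_of% ιB_hocolimMap, ιB_stationarySeqRetraction, Finset.sum_range_succ])

lemma hocolimMap_comp_stationarySeqDesc (f : A ⟶ B) :
    hocolimMap _ (stationarySeqMap f) ≫ stationarySeqDesc f = 0 :=
  stationarySeq_hom_ext
    (by simp [reassoc_of% ιA_hocolimMap, ιA_stationarySeqDesc, ιB_stationarySeqDesc])
    (fun n => by simp [reassoc_of% ιB_hocolimMap, ιB_stationarySeqDesc])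

lemma stationarySeqRetraction_comp_hocolimMap_add (f : A ⟶ B) :
    stationarySeqRetraction ≫ hocolimMap _ (stationarySeqMap f) +
      stationarySeqDesc f ≫ ιB 0 = 𝟙 _ :=
  stationarySeq_hom_ext
    (by simp [reassoc_of% ιA_stationarySeqRetraction, ιA_hocolimMap,
      reassoc_of% ιA_stationarySeqDesc])
    (fun n => by simp [reassoc_of% ιB_stationarySeqRetraction, sum_ιB_comp_hocolimMap,
      reassoc_of% ιB_stationarySeqDesc])

noncomputable def stationarySeqBicone (f : A ⟶ B) : BinaryBicone (∐ stationarySeq A B) B where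
  pt := ∐ stationarySeq A B
  fst := stationarySeqRetraction
  snd := stationarySeqDesc f
  inl := hocolimMap _ (stationarySeqMap f)
  inr := ιB 0
  inl_fst := hocolimMap_comp_stationarySeqRetraction f
  inl_snd := hocolimMap_comp_stationarySeqDesc f
  inr_fst := by simp [ιB_stationarySeqRetraction]
  inr_snd := ιB_stationarySeqDesc f 0

noncomputable def stationarySeqBiconeIsBilimit (f : A ⟶ B) : (stationarySeqBicone f).IsBilimit :=
  isBinaryBilimitOfTotal _ (stationarySeqRetraction_comp_hocolimMap_add f)

end StationarySeq

lemma triangle_distinguished_of_isBilimit {X Z : C} {b : BinaryBicone X Z} (hb : b.IsBilimit) :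
    Triangle.mk b.inl b.snd (0 : Z ⟶ X⟦(1 : ℤ)⟧) ∈ distTriang C := by
  refine isomorphic_distinguished _ (binaryBiproductTriangle_distinguished X Z) _
    (Triangle.isoMk _ _ (Iso.refl X) (biprod.uniqueUpToIso X Z hb) (Iso.refl Z) ?_ ?_ ?_)
  · change b.inl ≫ biprod.lift b.fst b.snd = 𝟙 X ≫ biprod.inl
    ext <;> simp
  · change b.snd ≫ 𝟙 Z = biprod.lift b.fst b.snd ≫ biprod.snd
    simp
  · exact zero_comp.trans comp_zero.symm

lemma isHocolim_stationarySeq {A B : C} (f : A ⟶ B) [HasCoproduct (stationarySeq A B)] :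
    IsHocolim (stationarySeq A B) (stationarySeqMap f) B :=
  ⟨stationarySeqDesc f, 0, triangle_distinguished_of_isBilimit (stationarySeqBiconeIsBilimit f)⟩

/-- Every strongly extension-closed class is extension-closed. -/
theorem stmt4 [HasCountableCoproducts C] (P : Set C) (hP : IsStronglyExtClosed P) :
    IsExtClosed P := by
  refine ⟨hP.1, fun T hT h₁ h₃ => hP.2 _ _ _ (isHocolim_stationarySeq T.mor₁) h₁ ?_⟩
  rintro (_ | n)
  · exact ⟨T.obj₃, ⟨T.mor₂, T.mor₃, hT⟩, h₃⟩
  · exact ⟨0, ⟨0, 0, contractible_distinguished T.obj₂⟩, hP.1⟩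
end

section
/- If C′ and D are classes of objects in a triangulated category (with small coproducts) such that C′ ⊥ D (i.e. Hom(X, Y) = 0 for all X ∈ C′, Y ∈ D), then the big extension-closure C of C′ also satisfies C ⊥ D. -/
/-! The left orthogonal `{X | X ⊥ D}` contains `C′`, and it is closed under coproducts, retracts
and extensions, so it contains the big extension-closure. The one point needing an argument is a
homotopy colimit `∐ Yᵢ ⟶ ∐ Yᵢ ⟶ H ⟶ (∐ Yᵢ)[1]` with `Y₀ ⊥ T` and cones `Zᵢ ⊥ T` of the `φᵢ`. By
induction every `Yᵢ ⊥ T`, so a map `H ⟶ T` factors through `(∐ Yᵢ)[1]`. Since `Zᵢ ⊥ T`, every map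
`Yᵢ[1] ⟶ T` extends along `φᵢ[1]`, and solving `cᵢ - φᵢ[1] ≫ cᵢ₊₁ = tᵢ` recursively shows that
every map `(∐ Yᵢ)[1] ⟶ T` extends along `(1 - φ)[1]`. Composed with `H ⟶ (∐ Yᵢ)[1]`, that map is zero.
-/

open CategoryTheory CategoryTheory.Limits CategoryTheory.Pretriangulated ZeroObject

universe v u

variable {C : Type u} [Category.{v} C] [Preadditive C] [HasZeroObject C]
  [HasShift C ℤ] [∀ n : ℤ, (shiftFunctor C n).Additive] [Pretriangulated C]

/-- `X` is a retract of `Y`. -/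
def IsRetractOf (X Y : C) : Prop :=
  ∃ (i : X ⟶ Y) (r : Y ⟶ X), i ≫ r = 𝟙 X

/-- A class of objects is closed under retracts. -/
def IsRetractClosed (P : Set C) : Prop :=
  ∀ X Y : C, IsRetractOf X Y → Y ∈ P → X ∈ P

/-- A class of objects is closed under arbitrary small coproducts. -/
def IsCoprodClosed [HasCoproducts.{v} C] (P : Set C) : Prop :=
  ∀ (ι : Type v) (Z : ι → C), (∀ i, Z i ∈ P) → (∐ Z) ∈ P

/-- The big extension-closure of a class `C'`: the smallest strongly extension-closed,
retract-closed class containing `C'` and closed under arbitrary small coproducts. -/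
def bigExtClosure [HasCoproducts.{v} C] (C' : Set C) : Set C :=
  ⋂₀ {P : Set C | C' ⊆ P ∧ IsStronglyExtClosed P ∧ IsRetractClosed P ∧ IsCoprodClosed P}

section

variable {A : Type*} [Category A]

lemma isRetractClosed_leftOrthogonal [HasZeroMorphisms A] (P : ObjectProperty A) :
    IsRetractClosed {X | P.leftOrthogonal X} := by
  rintro X X' ⟨i, r, hir⟩ hX' Y f hY
  rw [← Category.id_comp f, ← hir, Category.assoc, hX' (r ≫ f) hY, comp_zero]

lemma isCoprodClosed_leftOrthogonal [HasZeroMorphisms A] [HasCoproducts A]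
    (P : ObjectProperty A) : IsCoprodClosed {X | P.leftOrthogonal X} :=
  fun _ _ hZ _ f hY => Sigma.hom_ext _ _ fun i => by simpa using hZ i (Sigma.ι _ i ≫ f) hY

variable [Preadditive A] {Y : ℕ → A} (φ : ∀ i, Y i ⟶ Y (i + 1)) [HasCoproduct Y]

lemma exists_hocolimMap_comp_eq {T : A} (hφ : ∀ i (t : Y i ⟶ T), ∃ s, φ i ≫ s = t)
    (g : ∐ Y ⟶ T) : ∃ g', hocolimMap Y φ ≫ g' = g := by
  choose s hs using hφ
  let c : ∀ i, Y i ⟶ T := fun i =>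
    Nat.rec (motive := fun i => Y i ⟶ T) 0 (fun n cn => s n (cn - Sigma.ι Y n ≫ g)) i
  refine ⟨Sigma.desc c, Sigma.hom_ext _ _ fun i => ?_⟩
  have hc : φ i ≫ c (i + 1) = c i - Sigma.ι Y i ≫ g := hs _ _
  simp only [hocolimMap, Sigma.ι_desc_assoc, Preadditive.sub_comp, Category.assoc, Sigma.ι_desc,
    hc, sub_sub_cancel]

lemma sigmaComparison_comp_map_hocolimMap {B : Type*} [Category B] [Preadditive B]
    (G : A ⥤ B) [G.Additive] [HasCoproduct fun i => G.obj (Y i)] :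
    sigmaComparison G Y ≫ G.map (hocolimMap Y φ) =
      hocolimMap (fun i => G.obj (Y i)) (fun i => G.map (φ i)) ≫ sigmaComparison G Y :=
  Sigma.hom_ext _ _ fun i => by
    rw [ι_comp_sigmaComparison_assoc, ← G.map_comp]
    simp [hocolimMap]

lemma exists_map_hocolimMap_comp_eq {B : Type*} [Category B] [Preadditive B]
    (G : A ⥤ B) [G.Additive] [HasCoproduct fun i => G.obj (Y i)]
    [PreservesColimit (Discrete.functor Y) G] {T : B}
    (hφ : ∀ i (t : G.obj (Y i) ⟶ T), ∃ s, G.map (φ i) ≫ s = t) (g : G.obj (∐ Y) ⟶ T) :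
    ∃ g', G.map (hocolimMap Y φ) ≫ g' = g := by
  obtain ⟨g', hg'⟩ := exists_hocolimMap_comp_eq _ hφ (sigmaComparison G Y ≫ g)
  refine ⟨inv (sigmaComparison G Y) ≫ g', ?_⟩
  rw [← cancel_epi (sigmaComparison G Y), reassoc_of% sigmaComparison_comp_map_hocolimMap,
    IsIso.hom_inv_id_assoc, hg']

end

lemma exists_shift_comp_eq_of_distTriang {T : Triangle C} (hT : T ∈ distTriang C) {W : C}
    (h₃ : ∀ u : T.obj₃ ⟶ W, u = 0) (t : T.obj₁⟦(1 : ℤ)⟧ ⟶ W) :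
    ∃ s, T.mor₁⟦(1 : ℤ)⟧' ≫ s = t := by
  -- the twice rotated triangle has middle map `-T.mor₁⟦1⟧'`
  obtain ⟨s, hs⟩ := Triangle.yoneda_exact₂ _ (rot_of_distTriang _ (rot_of_distTriang _ hT)) t
    (h₃ _)
  exact ⟨-s, hs ▸ (Preadditive.comp_neg _ _).trans (Preadditive.neg_comp _ _).symm⟩

lemma leftOrthogonal_of_isHocolim [HasCountableCoproducts C] (P : ObjectProperty C)
    {Y : ℕ → C} {φ : ∀ i, Y i ⟶ Y (i + 1)} {H : C} (hH : IsHocolim Y φ H)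
    (hY₀ : P.leftOrthogonal (Y 0)) (hcone : ∀ i, ∃ Z, IsConeOf (φ i) Z ∧ P.leftOrthogonal Z) :
    P.leftOrthogonal H := by
  intro T f hT
  choose Z hZ hZP using hcone
  choose ψ δ hdist using hZ
  have hY : ∀ i, P.leftOrthogonal (Y i) := fun i =>
    Nat.rec hY₀
      (fun n hn => P.leftOrthogonal.ext_of_isTriangulatedClosed₂ _ (hdist n) hn (hZP n)) i
  obtain ⟨ι', π, hH⟩ := hH
  have hι' : ι' ≫ f = 0 := Sigma.hom_ext _ _ fun i => by simpa using hY i _ hT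
  obtain ⟨g, rfl⟩ := Triangle.yoneda_exact₃ _ hH f hι'
  obtain ⟨g', rfl⟩ := exists_map_hocolimMap_comp_eq φ (shiftFunctor C (1 : ℤ))
    (fun i => exists_shift_comp_eq_of_distTriang (hdist i) fun u => hZP i u hT) g
  exact (comp_distTriang_mor_zero₃₁_assoc _ hH g').trans zero_comp

lemma isStronglyExtClosed_leftOrthogonal [HasCountableCoproducts C] (P : ObjectProperty C) :
    IsStronglyExtClosed {X | P.leftOrthogonal X} :=
  ⟨fun _ f _ => (isZero_zero C).eq_of_src f 0, fun _ _ _ hH hY₀ hcone =>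
    leftOrthogonal_of_isHocolim P hH hY₀ hcone⟩

theorem stmt5 [HasCoproducts.{v} C] (C' D : Set C)
    (h : ∀ X ∈ C', ∀ Y ∈ D, ∀ f : X ⟶ Y, f = 0) :
    ∀ X ∈ bigExtClosure C', ∀ Y ∈ D, ∀ f : X ⟶ Y, f = 0 := by
  intro X hX Y hY f
  have hclosure : bigExtClosure C' ⊆ {X | ObjectProperty.leftOrthogonal (· ∈ D) X} :=
    Set.sInter_subset_of_mem ⟨fun X hX Y f hY => h X hX Y hY f,
      isStronglyExtClosed_leftOrthogonal _, isRetractClosed_leftOrthogonal _,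
      isCoprodClosed_leftOrthogonal _⟩
  exact hclosure hX f hY
end

section
/- If D is a class of compact objects in a triangulated category (with small coproducts) and D ⊥ C′ for some class C′ of objects, then D is orthogonal to the big extension-closure of C′. -/
open CategoryTheory CategoryTheory.Limits CategoryTheory.Pretriangulated ZeroObject

universe v u

variable {C : Type u} [Category.{v} C] [Preadditive C] [HasZeroObject C]
  [HasShift C ℤ] [∀ n : ℤ, (shiftFunctor C n).Additive] [Pretriangulated C]

/-- The canonical homomorphism `⊕ᵢ Hom(c, Zᵢ) ⟶ Hom(c, ∐ Zᵢ)`. -/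
noncomputable def coprodHom (c : C) (ι : Type v) [DecidableEq ι] (Z : ι → C) [HasCoproduct Z] :
    DirectSum ι (fun i => c ⟶ Z i) →+ (c ⟶ ∐ Z) :=
  DirectSum.toAddMonoid fun i =>
    AddMonoidHom.mk' (fun f => f ≫ Sigma.ι Z i) (fun _ _ => Preadditive.add_comp _ _ _ _ _ _)

/-- An object is compact if `Hom(c, −)` commutes with all small coproducts:
the canonical map `⊕ᵢ Hom(c, Zᵢ) ⟶ Hom(c, ∐ Zᵢ)` is bijective. -/
def IsCompactObj (c : C) : Prop :=
  ∀ (ι : Type v) (_ : DecidableEq ι) (Z : ι → C) (_ : HasCoproduct Z),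
    Function.Bijective (coprodHom c ι Z)

/-! The objects `c` with `Hom(d, c) = 0` form a class containing `C'`, and for compact `d` it is
closed under coproducts, retracts and extensions; the only real work is closure under homotopy
colimits. If `∐ Y ⟶ ∐ Y ⟶ H ⟶ (∐ Y)⟦1⟧` is distinguished, with first map `1 - shift`, and all
`Hom(d, Y n)` vanish, it suffices that postcomposition with `(1 - shift)⟦1⟧` is injective on
`Hom(d, (∐ Y)⟦1⟧)`. The shift functor commutes with coproducts, and by compactness
`Hom(d, ∐ Y) = ⨁ Hom(d, Y n)`, on which `1 - shift` is injective: a finitely supported fixed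
point of the index shift `n ↦ n + 1` vanishes, by induction on `n`. -/

universe w

namespace DirectSum

variable {M : ℕ → Type*} [∀ n, AddCommMonoid (M n)] (φ : ∀ n, M n →+ M (n + 1))

noncomputable def seqShift : (⨁ i : ULift.{w} ℕ, M i.down) →+ ⨁ i : ULift.{w} ℕ, M i.down :=
  toAddMonoid fun i => (of (fun j : ULift.{w} ℕ => M j.down) ⟨i.down + 1⟩).comp (φ i.down)

@[simp]
lemma seqShift_of (n : ℕ) (m : M n) :
    seqShift φ (of (fun j : ULift.{w} ℕ => M j.down) ⟨n⟩ m) = of _ ⟨n + 1⟩ (φ n m) :=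
  toAddMonoid_of _ _ _

lemma seqShift_apply_zero (x : ⨁ i : ULift.{w} ℕ, M i.down) : seqShift φ x ⟨0⟩ = 0 := by
  induction x using DirectSum.induction_on with
  | zero => simp
  | of i m =>
    obtain ⟨k⟩ := i
    rw [seqShift_of]
    exact of_eq_of_ne _ _ _ (by simp)
  | add x y hx hy => rw [map_add, add_apply, hx, hy, add_zero]

lemma seqShift_apply_succ (x : ⨁ i : ULift.{w} ℕ, M i.down) (n : ℕ) :
    seqShift φ x ⟨n + 1⟩ = φ n (x ⟨n⟩) := by
  induction x using DirectSum.induction_on with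
  | zero => simp
  | of i m =>
    obtain ⟨k⟩ := i
    rcases eq_or_ne k n with rfl | hkn
    · simp
    · rw [seqShift_of, of_eq_of_ne _ _ _ (by simpa using hkn.symm),
        of_eq_of_ne _ _ _ (by simpa using hkn.symm), map_zero]
  | add x y hx hy => rw [map_add, add_apply, add_apply, hx, hy, map_add]

lemma eq_zero_of_seqShift_eq {x : ⨁ i : ULift.{w} ℕ, M i.down} (hx : seqShift φ x = x) :
    x = 0 := by
  have hcomp : ∀ n : ℕ, x ⟨n⟩ = 0 := by
    intro n
    induction n with
    | zero => rw [← hx, seqShift_apply_zero]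
    | succ n ih => rw [← hx, seqShift_apply_succ, ih, map_zero]
  ext ⟨n⟩
  simp [hcomp]

end DirectSum

open scoped DirectSum

set_option linter.unusedSectionVars false

def rightOrth (d : C) : Set C :=
  {c | ∀ f : d ⟶ c, f = 0}

lemma zero_mem_rightOrth (d : C) : (0 : C) ∈ rightOrth d :=
  fun f => (isZero_zero C).eq_of_tgt f 0

lemma isRetractClosed_rightOrth (d : C) : IsRetractClosed (rightOrth d) := by
  rintro X Y ⟨i, r, hir⟩ hY f
  rw [← Category.comp_id f, ← hir, ← Category.assoc, hY (f ≫ i), zero_comp]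

lemma mem_rightOrth_of_isConeOf {d A B Z : C} {f : A ⟶ B} (hcone : IsConeOf f Z)
    (hA : A ∈ rightOrth d) (hZ : Z ∈ rightOrth d) : B ∈ rightOrth d := by
  obtain ⟨g, h, hT⟩ := hcone
  intro b
  obtain ⟨a : d ⟶ A, rfl⟩ := Triangle.coyoneda_exact₂ _ hT b (hZ (b ≫ g))
  exact (hA a).symm ▸ zero_comp

lemma isCoprodClosed_rightOrth [HasCoproducts.{v} C] {d : C} (hd : IsCompactObj d) :
    IsCoprodClosed (rightOrth d) := by
  classical
  intro ι Z hZ f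
  obtain ⟨x, rfl⟩ := (hd ι inferInstance Z inferInstance).2 f
  rw [show x = 0 from DFinsupp.ext fun i => hZ i (x i), map_zero]

noncomputable def sigmaULiftIso (Y : ℕ → C) [HasCoproduct Y]
    [HasCoproduct fun i : ULift.{w} ℕ => Y i.down] : (∐ fun i : ULift.{w} ℕ => Y i.down) ≅ ∐ Y where
  hom := Sigma.desc fun i => Sigma.ι Y i.down
  inv := Sigma.desc fun n => Sigma.ι (fun i : ULift.{w} ℕ => Y i.down) ⟨n⟩

-- `IsCompactObj` only speaks about coproducts indexed by `Type v`, hence the lift of `ℕ`.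
noncomputable def coprodHomNat (d : C) (Y : ℕ → C) [HasCoproduct Y]
    [HasCoproduct fun i : ULift.{v} ℕ => Y i.down] :
    (⨁ i : ULift.{v} ℕ, d ⟶ Y i.down) →+ (d ⟶ ∐ Y) :=
  (Preadditive.rightComp d (sigmaULiftIso Y).hom).comp
    (coprodHom d (ULift.{v} ℕ) fun i => Y i.down)

@[simp]
lemma coprodHomNat_of (d : C) (Y : ℕ → C) [HasCoproduct Y]
    [HasCoproduct fun i : ULift.{v} ℕ => Y i.down] (n : ℕ) (f : d ⟶ Y n) :
    coprodHomNat d Y (DirectSum.of (fun i : ULift.{v} ℕ => d ⟶ Y i.down) ⟨n⟩ f) =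
      f ≫ Sigma.ι Y n := by
  rw [coprodHomNat, AddMonoidHom.comp_apply, coprodHom, DirectSum.toAddMonoid_of]
  simp [sigmaULiftIso, Preadditive.rightComp]

lemma IsCompactObj.coprodHomNat_bijective {d : C} (hd : IsCompactObj d) (Y : ℕ → C)
    [HasCoproduct Y] [HasCoproduct fun i : ULift.{v} ℕ => Y i.down] :
    Function.Bijective (coprodHomNat d Y) := by
  have hpost : Function.Bijective fun f : d ⟶ _ => f ≫ (sigmaULiftIso Y).hom :=
    ⟨fun _ _ h => (cancel_mono _).1 h, fun g => ⟨g ≫ (sigmaULiftIso Y).inv, by simp⟩⟩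
  exact hpost.comp (hd _ inferInstance _ inferInstance)

lemma coprodHomNat_comp_hocolimMap (d : C) (Y : ℕ → C) (φ : ∀ i, Y i ⟶ Y (i + 1))
    [HasCoproduct Y] [HasCoproduct fun i : ULift.{v} ℕ => Y i.down]
    (x : ⨁ i : ULift.{v} ℕ, d ⟶ Y i.down) :
    coprodHomNat d Y x ≫ hocolimMap Y φ =
      coprodHomNat d Y (x - DirectSum.seqShift (fun n => Preadditive.rightComp d (φ n)) x) := by
  induction x using DirectSum.induction_on with
  | zero => simp
  | of i f =>
    obtain ⟨n⟩ := i
    simp [hocolimMap, Preadditive.comp_sub, Preadditive.rightComp]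
  | add x y hx hy =>
    rw [map_add, Preadditive.add_comp, hx, hy, ← map_add,
      map_add (DirectSum.seqShift fun n => Preadditive.rightComp d (φ n)) x y, add_sub_add_comm]

lemma IsCompactObj.eq_zero_of_comp_hocolimMap {d : C} (hd : IsCompactObj d) (Y : ℕ → C)
    (φ : ∀ i, Y i ⟶ Y (i + 1)) [HasCoproduct Y] [HasCoproduct fun i : ULift.{v} ℕ => Y i.down]
    {g : d ⟶ ∐ Y} (hg : g ≫ hocolimMap Y φ = 0) : g = 0 := by
  obtain ⟨hinj, hsurj⟩ := hd.coprodHomNat_bijective Y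
  obtain ⟨x, rfl⟩ := hsurj g
  rw [coprodHomNat_comp_hocolimMap, ← map_zero (coprodHomNat d Y)] at hg
  rw [DirectSum.eq_zero_of_seqShift_eq _ (sub_eq_zero.mp (hinj hg)).symm, map_zero]

lemma hocolimMap_comp_sigmaComparison (F : C ⥤ C) [F.Additive] (Y : ℕ → C)
    (φ : ∀ i, Y i ⟶ Y (i + 1)) [HasCoproduct Y] [HasCoproduct fun i => F.obj (Y i)] :
    hocolimMap (fun i => F.obj (Y i)) (fun i => F.map (φ i)) ≫ sigmaComparison F Y =
      sigmaComparison F Y ≫ F.map (hocolimMap Y φ) := by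
  rw [hocolimMap, hocolimMap, sigmaComparison_map_desc]
  ext i
  simp

lemma IsCompactObj.eq_zero_of_comp_shift_hocolimMap [HasCoproducts.{v} C] {d : C}
    (hd : IsCompactObj d) (Y : ℕ → C) (φ : ∀ i, Y i ⟶ Y (i + 1)) {g : d ⟶ (∐ Y)⟦(1 : ℤ)⟧}
    (hg : g ≫ (hocolimMap Y φ)⟦(1 : ℤ)⟧' = 0) : g = 0 := by
  let e := sigmaComparison (shiftFunctor C (1 : ℤ)) Y
  have h : (g ≫ inv e) ≫ hocolimMap _ (fun i => (φ i)⟦(1 : ℤ)⟧') = 0 := by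
    rw [← cancel_mono e, Category.assoc, Category.assoc, hocolimMap_comp_sigmaComparison,
      IsIso.inv_hom_id_assoc, hg, zero_comp]
  simpa using hd.eq_zero_of_comp_hocolimMap _ _ h

lemma isStronglyExtClosed_rightOrth [HasCoproducts.{v} C] {d : C} (hd : IsCompactObj d) :
    IsStronglyExtClosed (rightOrth d) := by
  refine ⟨zero_mem_rightOrth d, fun Y φ H ⟨ι', π, hT⟩ hY₀ hcones => ?_⟩
  have hY : ∀ n, Y n ∈ rightOrth d := by
    intro n
    induction n with
    | zero => exact hY₀
    | succ n ih =>
      obtain ⟨Z, hcone, hZ⟩ := hcones n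
      exact mem_rightOrth_of_isConeOf hcone ih hZ
  have hsigma : ∐ Y ∈ rightOrth d :=
    isRetractClosed_rightOrth d _ _ ⟨(sigmaULiftIso Y).inv, (sigmaULiftIso Y).hom, by simp⟩
      (isCoprodClosed_rightOrth hd _ _ fun i => hY i.down)
  intro f
  have hπ₃₁ : π ≫ (hocolimMap Y φ)⟦(1 : ℤ)⟧' = 0 := comp_distTriang_mor_zero₃₁ _ hT
  have hπ : f ≫ π = 0 := hd.eq_zero_of_comp_shift_hocolimMap Y φ <| by
    rw [Category.assoc, hπ₃₁, comp_zero]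
  obtain ⟨g : d ⟶ ∐ Y, rfl⟩ := Triangle.coyoneda_exact₃ _ hT f hπ
  exact (hsigma g).symm ▸ zero_comp

lemma bigExtClosure_subset_rightOrth [HasCoproducts.{v} C] {C' : Set C} {d : C}
    (hd : IsCompactObj d) (h : C' ⊆ rightOrth d) : bigExtClosure C' ⊆ rightOrth d :=
  Set.sInter_subset_of_mem
    ⟨h, isStronglyExtClosed_rightOrth hd, isRetractClosed_rightOrth d, isCoprodClosed_rightOrth hd⟩

/-- If `D` consists of compact objects and `D ⊥ C'`, then `D` is orthogonal to the big
extension-closure of `C'`. -/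
theorem stmt6 [HasCoproducts.{v} C] (C' D : Set C)
    (hD : ∀ d ∈ D, IsCompactObj d)
    (h : ∀ d ∈ D, ∀ c ∈ C', ∀ f : d ⟶ c, f = 0) :
    ∀ d ∈ D, ∀ c ∈ bigExtClosure C', ∀ f : d ⟶ c, f = 0 :=
  fun d hd => bigExtClosure_subset_rightOrth (hD d hd) (h d hd)
end

section
/- If w is a weight structure on a triangulated category 𝒞, then the classes 𝒞_{w≤0}, 𝒞_{w≥0}, and 𝒞_{w=0} = 𝒞_{w≤0} ∩ 𝒞_{w≥0} are extension-closed. -/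
open CategoryTheory CategoryTheory.Limits CategoryTheory.Pretriangulated ZeroObject

universe v u

/-- A weight structure (homological convention) on a triangulated category: a pair of
additive retract-closed classes `(le, ge)` (playing the roles of `C_{w≤0}` and `C_{w≥0}`)
satisfying shift-stability `C_{w≤0} ⊆ C_{w≤0}[1]`, `C_{w≥0}[1] ⊆ C_{w≥0}`, the
orthogonality `Hom(C_{w≤0}, C_{w≥0}[1]) = 0`, and the existence of weight decompositions
`B → M → A → B[1]` with `B ∈ C_{w≤0}` and `A ∈ C_{w≥0}[1]`. -/
structure WeightStructure (C : Type u) [Category.{v} C] [Preadditive C] [HasZeroObject C]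
    [HasBinaryBiproducts C] [HasShift C ℤ] [∀ n : ℤ, (shiftFunctor C n).Additive]
    [Pretriangulated C] where
  le : Set C
  ge : Set C
  le_zero : (0 : C) ∈ le
  ge_zero : (0 : C) ∈ ge
  le_retract : ∀ X Y : C, (∃ (i : X ⟶ Y) (r : Y ⟶ X), i ≫ r = 𝟙 X) → Y ∈ le → X ∈ le
  ge_retract : ∀ X Y : C, (∃ (i : X ⟶ Y) (r : Y ⟶ X), i ≫ r = 𝟙 X) → Y ∈ ge → X ∈ ge
  le_add : ∀ X Y : C, X ∈ le → Y ∈ le → (X ⊞ Y) ∈ le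
  ge_add : ∀ X Y : C, X ∈ ge → Y ∈ ge → (X ⊞ Y) ∈ ge
  le_shift : ∀ X : C, X ∈ le → X⟦(-1 : ℤ)⟧ ∈ le
  ge_shift : ∀ X : C, X ∈ ge → X⟦(1 : ℤ)⟧ ∈ ge
  orth : ∀ X ∈ le, ∀ Y ∈ ge, ∀ f : X ⟶ Y⟦(1 : ℤ)⟧, f = 0
  decomp : ∀ M : C, ∃ (B A : C) (f : B ⟶ M) (g : M ⟶ A) (h : A ⟶ B⟦(1 : ℤ)⟧),
    B ∈ le ∧ A⟦(-1 : ℤ)⟧ ∈ ge ∧ Triangle.mk f g h ∈ distTriang C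

variable {C : Type u} [Category.{v} C] [Preadditive C] [HasZeroObject C]
  [HasBinaryBiproducts C] [HasShift C ℤ] [∀ n : ℤ, (shiftFunctor C n).Additive]
  [Pretriangulated C]

/-! Let `X → Y → Z → X⟦1⟧` be distinguished. If `X, Z ∈ C_{w≤0}`, take a weight decomposition
`B → Y → A`; orthogonality kills `X → A` and `Z → A`, hence the long exact sequence kills
`Y → A`, so `B → Y` is split epi and `Y` is a retract of `B ∈ C_{w≤0}`. Dually, if
`X, Z ∈ C_{w≥0}`, decompose `Y⟦1⟧` as `B → Y⟦1⟧ → A`: as `B` has no maps to `X⟦1⟧` or `Z⟦1⟧`,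
the map `B → Y⟦1⟧` vanishes, so `Y⟦1⟧` is a retract of `A ∈ C_{w≥0}⟦1⟧`. -/

namespace CategoryTheory.Pretriangulated

omit [HasBinaryBiproducts C]

variable (T : Triangle C) (hT : T ∈ distTriang C)
include hT

lemma hom_from_obj₂_eq_zero_of_distTriang {W : C} (h₁ : ∀ g : T.obj₁ ⟶ W, g = 0)
    (h₃ : ∀ g : T.obj₃ ⟶ W, g = 0) (f : T.obj₂ ⟶ W) : f = 0 := by
  obtain ⟨g, rfl⟩ := T.yoneda_exact₂ hT f (h₁ _)
  rw [h₃ g, comp_zero]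

lemma hom_to_obj₂_eq_zero_of_distTriang {W : C} (h₁ : ∀ g : W ⟶ T.obj₁, g = 0)
    (h₃ : ∀ g : W ⟶ T.obj₃, g = 0) (f : W ⟶ T.obj₂) : f = 0 := by
  obtain ⟨g, rfl⟩ := T.coyoneda_exact₂ hT f (h₃ _)
  rw [h₁ g, zero_comp]

lemma nonempty_retract_obj₁_of_mor₂_eq_zero (h : T.mor₂ = 0) :
    Nonempty (Retract T.obj₂ T.obj₁) := by
  obtain ⟨r, hr⟩ := T.coyoneda_exact₂ hT (𝟙 T.obj₂) (by rw [h, comp_zero])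
  exact ⟨⟨r, T.mor₁, hr.symm⟩⟩

lemma nonempty_retract_obj₃_of_mor₁_eq_zero (h : T.mor₁ = 0) :
    Nonempty (Retract T.obj₂ T.obj₃) := by
  obtain ⟨r, hr⟩ := T.yoneda_exact₂ hT (𝟙 T.obj₂) (by rw [h, zero_comp])
  exact ⟨⟨T.mor₂, r, hr.symm⟩⟩

end CategoryTheory.Pretriangulated

omit [HasBinaryBiproducts C] in
lemma IsExtClosed.inter {P Q : Set C} (hP : IsExtClosed P) (hQ : IsExtClosed Q) :
    IsExtClosed (P ∩ Q) :=
  ⟨⟨hP.1, hQ.1⟩, fun T hT h₁ h₃ => ⟨hP.2 T hT h₁.1 h₃.1, hQ.2 T hT h₁.2 h₃.2⟩⟩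

namespace WeightStructure

variable (w : WeightStructure C)

lemma mem_le_of_retract {X Y : C} (h : Retract X Y) (hY : Y ∈ w.le) : X ∈ w.le :=
  w.le_retract X Y ⟨h.i, h.r, h.retract⟩ hY

lemma mem_ge_of_retract {X Y : C} (h : Retract X Y) (hY : Y ∈ w.ge) : X ∈ w.ge :=
  w.ge_retract X Y ⟨h.i, h.r, h.retract⟩ hY

lemma hom_eq_zero_of_mem_le_of_shift_mem_ge {X A : C} (hX : X ∈ w.le)
    (hA : A⟦(-1 : ℤ)⟧ ∈ w.ge) (f : X ⟶ A) : f = 0 := by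
  rw [← cancel_mono (shiftNegShift A (1 : ℤ)).inv, zero_comp]
  exact w.orth X hX _ hA _

lemma isExtClosed_le : IsExtClosed w.le := by
  refine ⟨w.le_zero, fun T hT h₁ h₃ => ?_⟩
  obtain ⟨B, A, _, g, _, hB, hA, hD⟩ := w.decomp T.obj₂
  have hg : g = 0 := hom_from_obj₂_eq_zero_of_distTriang T hT
    (w.hom_eq_zero_of_mem_le_of_shift_mem_ge h₁ hA)
    (w.hom_eq_zero_of_mem_le_of_shift_mem_ge h₃ hA) g
  obtain ⟨e⟩ := nonempty_retract_obj₁_of_mor₂_eq_zero _ hD hg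
  exact w.mem_le_of_retract e hB

lemma isExtClosed_ge : IsExtClosed w.ge := by
  refine ⟨w.ge_zero, fun T hT h₁ h₃ => ?_⟩
  obtain ⟨B, A, f, _, _, hB, hA, hD⟩ := w.decomp (T.obj₂⟦(1 : ℤ)⟧)
  have hf : f = 0 := hom_to_obj₂_eq_zero_of_distTriang _
    (T.shift_distinguished hT 1) (w.orth B hB _ h₁) (w.orth B hB _ h₃) f
  obtain ⟨e⟩ := nonempty_retract_obj₃_of_mor₁_eq_zero _ hD hf
  exact w.mem_ge_of_retract
    ((shiftShiftNeg T.obj₂ (1 : ℤ)).symm.retract.trans (e.map (shiftFunctor C (-1)))) hA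

end WeightStructure

/-- The classes `C_{w≤0}`, `C_{w≥0}` and `C_{w=0} = C_{w≤0} ∩ C_{w≥0}` of a weight
structure are extension-closed. -/
theorem stmt10 (w : WeightStructure C) :
    IsExtClosed w.le ∧ IsExtClosed w.ge ∧ IsExtClosed (w.le ∩ w.ge) :=
  ⟨w.isExtClosed_le, w.isExtClosed_ge, w.isExtClosed_le.inter w.isExtClosed_ge⟩
end

section
/- Let w be a weight structure on 𝒞 and 𝒟 ⊂ 𝒞 a triangulated subcategory such that w restricts to a weight structure on 𝒟 (i.e. Ob 𝒟 ∩ 𝒞_{w≤0} and Ob 𝒟 ∩ 𝒞_{w≥0} form a weight structure on 𝒟). Then the Karoubi-closures of 𝒞_{w≤0} and 𝒞_{w≥0}, viewed as classes of objects of the Verdier quotient 𝒞/𝒟, form a weight structure w′ on 𝒞/𝒟. -/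
/-!
Morphisms of `C/D` are left fractions `Q(f) Q(s)⁻¹` where `s` is a composite of morphisms whose
cones are retracts of objects of `D`. Orthogonality in `C/D` thus reduces to: if `Q` kills all
maps from `C_{w≤0}` into `V` and the cone `Z` of `s : V ⟶ U` is a retract of `Z' ∈ D`, then `Q`
kills every `f : A ⟶ U` with `A ∈ C_{w≤0}`. Indeed the composite `A ⟶ U ⟶ Z ⟶ Z'` factors through
the `w≤0` part `P ∈ D` of a weight decomposition of `Z'` inside `D`; the fibre `ι : A' ⟶ A` of
`A ⟶ P` lies in `C_{w≤0}` (an extension of `A` by `P⟦-1⟧`), is inverted by `Q`, and `ι ≫ f`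
factors through `s`.
The other axioms are formal; weight decompositions in `C/D` are images of those in `C`, since
`Q` is essentially surjective.
-/

open CategoryTheory CategoryTheory.Limits CategoryTheory.Pretriangulated ZeroObject

universe v u v₂ u₂

variable {C : Type u} [Category.{v} C] [Preadditive C] [HasZeroObject C]
  [HasBinaryBiproducts C] [HasShift C ℤ] [∀ n : ℤ, (shiftFunctor C n).Additive]
  [Pretriangulated C]

/-- The class of morphisms of `C` whose cone lies in the Karoubi-closure of `D`;
inverting these yields the Verdier quotient `C/D`. -/
def verdierW (D : Set C) : MorphismProperty C :=
  fun _ _ f => ∃ Z : C, IsConeOf f Z ∧ ∃ Z' ∈ D, ∃ (i : Z ⟶ Z') (r : Z' ⟶ Z), i ≫ r = 𝟙 Z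


open Category

namespace CategoryTheory

namespace MorphismProperty

variable {𝒞 : Type*} [Category 𝒞] (W : MorphismProperty 𝒞)

lemma multiplicativeClosure_isInvertedBy {𝒟 : Type*} [Category 𝒟] {L : 𝒞 ⥤ 𝒟}
    (hL : W.IsInvertedBy L) : W.multiplicativeClosure.IsInvertedBy L := by
  intro X Y f hf
  induction hf with
  | of f hf => exact hL f hf
  | id X => rw [L.map_id]; infer_instance
  | comp_of f g _ hg ih => rw [L.map_comp]; have := hL g hg; infer_instance

lemma multiplicativeClosure_transport {P : 𝒞 → Prop}
    (hW : ∀ ⦃X Y : 𝒞⦄ (f : X ⟶ Y), W f → P X → P Y) ⦃X Y : 𝒞⦄ {f : X ⟶ Y}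
    (hf : W.multiplicativeClosure f) (hX : P X) : P Y := by
  induction hf with
  | of f hf => exact hW f hf hX
  | id => exact hX
  | comp_of f g _ hg ih => exact hW g hg (ih hX)

lemma multiplicativeClosure_exists_leftFraction
    (hW : ∀ ⦃X' X Y : 𝒞⦄ (s : X' ⟶ X), W s → ∀ f : X' ⟶ Y,
      ∃ (Y' : 𝒞) (b : X ⟶ Y') (s' : Y ⟶ Y'), W s' ∧ f ≫ s' = s ≫ b)
    ⦃X' X : 𝒞⦄ {s : X' ⟶ X} (hs : W.multiplicativeClosure s) {Y : 𝒞} (f : X' ⟶ Y) :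
    ∃ (Y' : 𝒞) (b : X ⟶ Y') (s' : Y ⟶ Y'), W.multiplicativeClosure s' ∧ f ≫ s' = s ≫ b := by
  induction hs generalizing Y with
  | of s hs =>
    obtain ⟨Y', b, s', hs', fac⟩ := hW s hs f
    exact ⟨Y', b, s', .of s' hs', fac⟩
  | id X => exact ⟨Y, f, 𝟙 Y, .id Y, by simp⟩
  | comp_of s₁ s₂ _ hs₂ ih =>
    obtain ⟨Y₁, b₁, t₁, ht₁, fac₁⟩ := ih f
    obtain ⟨Y₂, b₂, t₂, ht₂, fac₂⟩ := hW s₂ hs₂ b₁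
    exact ⟨Y₂, b₂, t₁ ≫ t₂, .comp_of t₁ t₂ ht₁ ht₂, by rw [reassoc_of% fac₁, fac₂, assoc]⟩

lemma multiplicativeClosure_ext
    (hW : ∀ ⦃X' X Y : 𝒞⦄ (f₁ f₂ : X ⟶ Y) (s : X' ⟶ X), W s → s ≫ f₁ = s ≫ f₂ →
      ∃ (Y' : 𝒞) (t : Y ⟶ Y'), W t ∧ f₁ ≫ t = f₂ ≫ t)
    ⦃X' X : 𝒞⦄ {s : X' ⟶ X} (hs : W.multiplicativeClosure s) {Y : 𝒞} (f₁ f₂ : X ⟶ Y)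
    (fac : s ≫ f₁ = s ≫ f₂) :
    ∃ (Y' : 𝒞) (t : Y ⟶ Y'), W.multiplicativeClosure t ∧ f₁ ≫ t = f₂ ≫ t := by
  induction hs generalizing Y with
  | of s hs =>
    obtain ⟨Y', t, ht, fac'⟩ := hW f₁ f₂ s hs fac
    exact ⟨Y', t, .of t ht, fac'⟩
  | id X => exact ⟨Y, 𝟙 Y, .id Y, by simpa using fac⟩
  | comp_of s₁ s₂ _ hs₂ ih =>
    obtain ⟨Y₁, t₁, ht₁, fac₁⟩ := ih (s₂ ≫ f₁) (s₂ ≫ f₂) (by simpa using fac)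
    obtain ⟨Y₂, t₂, ht₂, fac₂⟩ := hW (f₁ ≫ t₁) (f₂ ≫ t₁) s₂ hs₂ (by simpa using fac₁)
    exact ⟨Y₂, t₁ ≫ t₂, .comp_of t₁ t₂ ht₁ ht₂, by simpa using fac₂⟩

lemma hasLeftCalculusOfFractions_multiplicativeClosure
    (hore : ∀ ⦃X' X Y : 𝒞⦄ (s : X' ⟶ X), W s → ∀ f : X' ⟶ Y,
      ∃ (Y' : 𝒞) (b : X ⟶ Y') (s' : Y ⟶ Y'), W s' ∧ f ≫ s' = s ≫ b)
    (hext : ∀ ⦃X' X Y : 𝒞⦄ (f₁ f₂ : X ⟶ Y) (s : X' ⟶ X), W s → s ≫ f₁ = s ≫ f₂ →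
      ∃ (Y' : 𝒞) (t : Y ⟶ Y'), W t ∧ f₁ ≫ t = f₂ ≫ t) :
    W.multiplicativeClosure.HasLeftCalculusOfFractions where
  exists_leftFraction _ _ φ := by
    obtain ⟨_, b, s', hs', fac⟩ := W.multiplicativeClosure_exists_leftFraction hore φ.hs φ.f
    exact ⟨⟨b, s', hs'⟩, fac⟩
  ext _ _ _ f₁ f₂ _ hs fac := by
    obtain ⟨Y', t, ht, fac'⟩ := W.multiplicativeClosure_ext hext hs f₁ f₂ fac
    exact ⟨Y', t, ht, fac'⟩

end MorphismProperty

lemma Functor.IsLocalization.multiplicativeClosure {𝒞 𝒟 : Type*} [Category 𝒞] [Category 𝒟]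
    (L : 𝒞 ⥤ 𝒟) (W : MorphismProperty 𝒞) [L.IsLocalization W] :
    L.IsLocalization W.multiplicativeClosure :=
  of_equivalence_source L W L _ Equivalence.refl
    (fun _ _ f hf => W.multiplicativeClosure.le_isoClosure _ (.of f hf))
    (W.multiplicativeClosure_isInvertedBy (Localization.inverts L W)) L.leftUnitor

end CategoryTheory

section Verdier

variable {𝒯 : Type*} [Category 𝒯] [Preadditive 𝒯] [HasZeroObject 𝒯] [HasShift 𝒯 ℤ]
  [∀ n : ℤ, (shiftFunctor 𝒯 n).Additive] [Pretriangulated 𝒯]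

/-- `s'` is a homotopy pushout of `s` along `f`, so its cone is again the cone `Z` of `s`. -/
lemma verdierW_exists_leftFraction (D : Set 𝒯) ⦃X' X Y : 𝒯⦄ (s : X' ⟶ X)
    (hs : verdierW D s) (f : X' ⟶ Y) :
    ∃ (Y' : 𝒯) (b : X ⟶ Y') (s' : Y ⟶ Y'), verdierW D s' ∧ f ≫ s' = s ≫ b := by
  obtain ⟨Z, ⟨g, h, hT⟩, hZ⟩ := hs
  obtain ⟨Y', s', g', hT'⟩ := distinguished_cocone_triangle₂ (h ≫ f⟦(1 : ℤ)⟧')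
  obtain ⟨b, fac, -⟩ := complete_distinguished_triangle_morphism₂ _ _ hT hT' f (𝟙 Z)
    (id_comp _).symm
  exact ⟨Y', b, s', ⟨Z, ⟨g', _, hT'⟩, hZ⟩, fac.symm⟩

/-- `f₁ - f₂` factors as `g ≫ q` through the cone `Z` of `s`; the cone morphism `t` of `q`
kills it, and the cone of `t` is `Z⟦1⟧`. -/
lemma verdierW_ext (D : Set 𝒯) (hD : ∀ X ∈ D, X⟦(1 : ℤ)⟧ ∈ D) ⦃X' X Y : 𝒯⦄ (f₁ f₂ : X ⟶ Y)
    (s : X' ⟶ X) (hs : verdierW D s) (fac : s ≫ f₁ = s ≫ f₂) :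
    ∃ (Y' : 𝒯) (t : Y ⟶ Y'), verdierW D t ∧ f₁ ≫ t = f₂ ≫ t := by
  obtain ⟨Z, ⟨g, h, hT⟩, Z', hZ', i, r, hir⟩ := hs
  obtain ⟨q, hq⟩ : ∃ q : Z ⟶ Y, f₁ - f₂ = g ≫ q := Triangle.yoneda_exact₂ _ hT (f₁ - f₂)
    (show s ≫ (f₁ - f₂) = 0 by rw [Preadditive.comp_sub, fac, sub_self])
  obtain ⟨Y', t, δ, hT'⟩ := distinguished_cocone_triangle q
  refine ⟨Y', t, ⟨Z⟦(1 : ℤ)⟧, ⟨δ, _, rot_of_distTriang _ hT'⟩, Z'⟦(1 : ℤ)⟧, hD Z' hZ',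
    i⟦(1 : ℤ)⟧', r⟦(1 : ℤ)⟧', by rw [← Functor.map_comp, hir, CategoryTheory.Functor.map_id]⟩, ?_⟩
  rw [← sub_eq_zero, ← Preadditive.sub_comp, hq, assoc, show q ≫ t = 0 from comp_distTriang_mor_zero₁₂ _ hT', comp_zero]

end Verdier

section KaroubiClosureImage

variable {𝒞 E : Type*} [Category 𝒞] [Category E] (Q : 𝒞 ⥤ E) (S : Set 𝒞)

def karoubiClosureImage : Set E :=
  {X | ∃ Y ∈ S, ∃ (i : X ⟶ Q.obj Y) (r : Q.obj Y ⟶ X), i ≫ r = 𝟙 X}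

variable {Q S}

lemma mem_karoubiClosureImage {X : E} {Y : 𝒞} (hY : Y ∈ S) (h : Retract X (Q.obj Y)) :
    X ∈ karoubiClosureImage Q S :=
  ⟨Y, hY, h.i, h.r, h.retract⟩

lemma mem_karoubiClosureImage_of_retract {X Y : E} (h : Retract X Y)
    (hY : Y ∈ karoubiClosureImage Q S) : X ∈ karoubiClosureImage Q S := by
  obtain ⟨Y₀, hY₀, i, r, hir⟩ := hY
  exact mem_karoubiClosureImage hY₀ (h.trans ⟨i, r, hir⟩)

lemma zero_mem_karoubiClosureImage [HasZeroObject E] [HasZeroMorphisms E] {Y : 𝒞}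
    (hY : Y ∈ S) : (0 : E) ∈ karoubiClosureImage Q S :=
  mem_karoubiClosureImage hY ⟨0, 0, by simp⟩

lemma biprod_mem_karoubiClosureImage [HasZeroMorphisms 𝒞] [HasZeroMorphisms E]
    [HasBinaryBiproducts 𝒞] [HasBinaryBiproducts E] [Q.PreservesZeroMorphisms]
    (hS : ∀ X Y : 𝒞, X ∈ S → Y ∈ S → (X ⊞ Y) ∈ S) {X Y : E}
    (hX : X ∈ karoubiClosureImage Q S) (hY : Y ∈ karoubiClosureImage Q S) :
    (X ⊞ Y) ∈ karoubiClosureImage Q S := by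
  obtain ⟨A, hA, iX, rX, hX⟩ := hX
  obtain ⟨B, hB, iY, rY, hY⟩ := hY
  exact mem_karoubiClosureImage (hS A B hA hB)
    ((Retract.mk (biprod.map iX iY) (biprod.map rX rY) (by ext <;> simp [hX, hY])).trans
      (Retract.mk (biprod.desc (Q.map biprod.inl) (Q.map biprod.inr))
        (biprod.lift (Q.map biprod.fst) (Q.map biprod.snd)) (by ext <;> simp [← Q.map_comp])))

lemma shift_mem_karoubiClosureImage [HasShift 𝒞 ℤ] [HasShift E ℤ] [Q.CommShift ℤ] (n : ℤ)
    (hS : ∀ Y ∈ S, Y⟦n⟧ ∈ S) {X : E} (hX : X ∈ karoubiClosureImage Q S) :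
    X⟦n⟧ ∈ karoubiClosureImage Q S := by
  obtain ⟨Y, hY, i, r, hir⟩ := hX
  exact mem_karoubiClosureImage (hS Y hY)
    ((Retract.map ⟨i, r, hir⟩ (shiftFunctor E n)).trans
      (Retract.ofIso ((Q.commShiftIso n).app Y).symm))

lemma eq_zero_of_mem_karoubiClosureImage [HasZeroMorphisms E] {T : Set 𝒞} (F : E ⥤ E)
    (h : ∀ A ∈ S, ∀ B ∈ T, ∀ ψ : Q.obj A ⟶ F.obj (Q.obj B), ψ = 0) {X Y : E}
    (hX : X ∈ karoubiClosureImage Q S) (hY : Y ∈ karoubiClosureImage Q T) (f : X ⟶ F.obj Y) :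
    f = 0 := by
  obtain ⟨A, hA, iX, rX, hX⟩ := hX
  obtain ⟨B, hB, iY, rY, hY⟩ := hY
  calc f = iX ≫ (rX ≫ f ≫ F.map iY) ≫ F.map rY := by
        simp [reassoc_of% hX, ← F.map_comp, hY]
    _ = 0 := by rw [h A hA B hB (rX ≫ f ≫ F.map iY), zero_comp, comp_zero]

end KaroubiClosureImage

namespace WeightStructure

variable (w : WeightStructure C)

lemma eq_zero_of_mem_le_of_shift_mem_ge {X Y : C} (hX : X ∈ w.le) (hY : Y⟦(-1 : ℤ)⟧ ∈ w.ge)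
    (f : X ⟶ Y) : f = 0 := by
  rw [← cancel_mono (shiftNegShift Y (1 : ℤ)).inv, zero_comp]
  exact w.orth X hX _ hY _

lemma mem_le_of_distTriang (T : Triangle C) (hT : T ∈ distTriang C) (h₁ : T.obj₁ ∈ w.le)
    (h₃ : T.obj₃ ∈ w.le) : T.obj₂ ∈ w.le := by
  obtain ⟨B, A, f, g, h, hB, hA, hD⟩ := w.decomp T.obj₂
  obtain ⟨y, hy⟩ := Triangle.yoneda_exact₂ T hT g (w.eq_zero_of_mem_le_of_shift_mem_ge h₁ hA _)
  have hg : g = 0 := by rw [hy, w.eq_zero_of_mem_le_of_shift_mem_ge h₃ hA y, comp_zero]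
  obtain ⟨r, hr⟩ := Triangle.coyoneda_exact₂ _ hD (𝟙 T.obj₂)
    (show 𝟙 T.obj₂ ≫ g = 0 by rw [id_comp, hg])
  exact w.le_retract _ B ⟨r, f, hr.symm⟩ hB

lemma map_eq_zero_of_verdierW (D : Set C)
    (hres : ∀ M ∈ D, ∃ (B A : C) (f : B ⟶ M) (g : M ⟶ A) (h : A ⟶ B⟦(1 : ℤ)⟧),
      B ∈ D ∧ B ∈ w.le ∧ A⟦(-1 : ℤ)⟧ ∈ w.ge ∧ Triangle.mk f g h ∈ distTriang C)
    {E : Type*} [Category E] [HasZeroMorphisms E] {Q : C ⥤ E}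
    (hQ : (verdierW D).IsInvertedBy Q) {V U : C} {s : V ⟶ U} (hs : verdierW D s)
    (hV : ∀ A ∈ w.le, ∀ f : A ⟶ V, Q.map f = 0) : ∀ A ∈ w.le, ∀ f : A ⟶ U, Q.map f = 0 := by
  intro A hA f
  obtain ⟨Z, ⟨g, h, hT⟩, Z', hZ', i, r, hir⟩ := hs
  obtain ⟨P, A₁, α, β, γ, hP, hPle, hA₁, hT₁⟩ := hres Z' hZ'
  obtain ⟨u, hu⟩ : ∃ u : A ⟶ P, f ≫ g ≫ i = u ≫ α :=
    Triangle.coyoneda_exact₂ _ hT₁ _ (w.eq_zero_of_mem_le_of_shift_mem_ge hA hA₁ _)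
  obtain ⟨A', ι, δ, hT'⟩ := distinguished_cocone_triangle₁ u
  have hA' : A' ∈ w.le :=
    w.mem_le_of_distTriang _ (inv_rot_of_distTriang _ hT') (w.le_shift P hPle) hA
  have hιfg : (ι ≫ f) ≫ g = 0 := by
    have : ι ≫ f ≫ g ≫ i = 0 := by
      rw [hu, ← assoc, show ι ≫ u = 0 from comp_distTriang_mor_zero₁₂ _ hT', zero_comp]
    simpa [hir] using this =≫ r
  obtain ⟨x, hx⟩ : ∃ x : A' ⟶ V, ι ≫ f = x ≫ s := Triangle.coyoneda_exact₂ _ hT _ hιfg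
  have : IsIso (Q.map ι) := hQ ι ⟨P, ⟨u, δ, hT'⟩, P, hP, 𝟙 P, 𝟙 P, id_comp _⟩
  rw [← cancel_epi (Q.map ι), comp_zero, ← Q.map_comp, hx, Q.map_comp, hV A' hA' x, zero_comp]

/-- `verdierW D` need not be closed under composition, but its multiplicative closure has a
calculus of left fractions and defines the same localization. -/
lemma map_eq_zero_of_mem_le_of_mem_ge (D : Set C) (hD : ∀ X ∈ D, X⟦(1 : ℤ)⟧ ∈ D)
    (hres : ∀ M ∈ D, ∃ (B A : C) (f : B ⟶ M) (g : M ⟶ A) (h : A ⟶ B⟦(1 : ℤ)⟧),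
      B ∈ D ∧ B ∈ w.le ∧ A⟦(-1 : ℤ)⟧ ∈ w.ge ∧ Triangle.mk f g h ∈ distTriang C)
    {E : Type*} [Category E] [HasZeroMorphisms E] [HasShift E ℤ] (Q : C ⥤ E) [Q.CommShift ℤ]
    [Q.PreservesZeroMorphisms] [Q.IsLocalization (verdierW D)] {A B : C} (hA : A ∈ w.le)
    (hB : B ∈ w.ge) (ψ : Q.obj A ⟶ (Q.obj B)⟦(1 : ℤ)⟧) : ψ = 0 := by
  let W := (verdierW D).multiplicativeClosure
  have : W.HasLeftCalculusOfFractions :=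
    (verdierW D).hasLeftCalculusOfFractions_multiplicativeClosure
      (verdierW_exists_leftFraction D) (verdierW_ext D hD)
  have : Q.IsLocalization W := Functor.IsLocalization.multiplicativeClosure Q (verdierW D)
  rw [← cancel_mono ((Q.commShiftIso (1 : ℤ)).inv.app B), zero_comp]
  obtain ⟨φ, hφ⟩ := Localization.exists_leftFraction Q W (ψ ≫ (Q.commShiftIso (1 : ℤ)).inv.app B)
  have hf : Q.map φ.f = 0 :=
    (verdierW D).multiplicativeClosure_transport
      (P := fun V => ∀ A ∈ w.le, ∀ f : A ⟶ V, Q.map f = 0)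
      (fun _ _ s hs => w.map_eq_zero_of_verdierW D hres (Localization.inverts Q _) hs) φ.hs
      (fun A' hA' f => by rw [w.orth A' hA' B hB f, Q.map_zero]) A hA φ.f
  have : IsIso (Q.map φ.s) := Localization.inverts Q W φ.s φ.hs
  rw [hφ, ← cancel_mono (Q.map φ.s), MorphismProperty.LeftFraction.map_comp_map_s, hf, zero_comp]

lemma exists_distTriang_karoubiClosureImage {E : Type*} [Category E] [Preadditive E]
    [HasZeroObject E] [HasShift E ℤ] [∀ n : ℤ, (shiftFunctor E n).Additive] [Pretriangulated E]
    (Q : C ⥤ E) [Q.CommShift ℤ] [Q.IsTriangulated] [Q.EssSurj] (M : E) :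
    ∃ (B A : E) (f : B ⟶ M) (g : M ⟶ A) (h : A ⟶ B⟦(1 : ℤ)⟧),
      B ∈ karoubiClosureImage Q w.le ∧ A⟦(-1 : ℤ)⟧ ∈ karoubiClosureImage Q w.ge ∧
        Triangle.mk f g h ∈ distTriang E := by
  obtain ⟨B, A, f, g, h, hB, hA, hT⟩ := w.decomp (Q.objPreimage M)
  obtain ⟨e⟩ : Nonempty (Q.obj (Q.objPreimage M) ≅ M) := ⟨Q.objObjPreimageIso M⟩
  refine ⟨Q.obj B, Q.obj A, Q.map f ≫ e.hom, e.inv ≫ Q.map g,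
    Q.map h ≫ (Q.commShiftIso (1 : ℤ)).hom.app B, mem_karoubiClosureImage hB (Retract.refl _),
    mem_karoubiClosureImage hA (Retract.ofIso ((Q.commShiftIso (-1 : ℤ)).app A).symm), ?_⟩
  exact isomorphic_distinguished _ (Q.map_distinguished _ hT) _
    (Triangle.isoMk _ _ (Iso.refl _) e.symm (Iso.refl _)
      (show (Q.map f ≫ e.hom) ≫ e.inv = 𝟙 _ ≫ Q.map f by simp)
      (show (e.inv ≫ Q.map g) ≫ 𝟙 _ = e.inv ≫ Q.map g by simp)
      (show (Q.map h ≫ (Q.commShiftIso (1 : ℤ)).hom.app B) ≫ (𝟙 (Q.obj B))⟦(1 : ℤ)⟧' =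
        𝟙 _ ≫ Q.map h ≫ (Q.commShiftIso (1 : ℤ)).hom.app B by simp))

end WeightStructure

/-- If a weight structure `w` on `C` restricts to a weight structure on a triangulated
subcategory `D` (i.e. every object of `D` admits a weight decomposition within `D`), then
the Karoubi-closures of the images of `C_{w≤0}` and `C_{w≥0}` in the Verdier quotient
`C/D` form a weight structure there. -/
theorem stmt16 {E : Type u₂} [Category.{v₂} E] [Preadditive E] [HasZeroObject E]
    [HasBinaryBiproducts E] [HasShift E ℤ] [∀ n : ℤ, (shiftFunctor E n).Additive]
    [Pretriangulated E]
    (w : WeightStructure C) (D : Set C)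
    (hD0 : (0 : C) ∈ D)
    (hDshift : ∀ X ∈ D, ∀ n : ℤ, X⟦n⟧ ∈ D)
    (hDext : ∀ T : Triangle C, (T ∈ distTriang C) → T.obj₁ ∈ D → T.obj₃ ∈ D → T.obj₂ ∈ D)
    (hres : ∀ M ∈ D, ∃ (B A : C) (f : B ⟶ M) (g : M ⟶ A) (h : A ⟶ B⟦(1 : ℤ)⟧),
      B ∈ D ∧ A ∈ D ∧ B ∈ w.le ∧ A⟦(-1 : ℤ)⟧ ∈ w.ge ∧ Triangle.mk f g h ∈ distTriang C)
    (Q : C ⥤ E) [Q.CommShift ℤ] [Q.IsTriangulated] [Q.EssSurj]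
    [Q.IsLocalization (verdierW D)] :
    ∃ w' : WeightStructure E,
      w'.le = {X : E | ∃ Y ∈ w.le, ∃ (i : X ⟶ Q.obj Y) (r : Q.obj Y ⟶ X), i ≫ r = 𝟙 X} ∧
      w'.ge = {X : E | ∃ Y ∈ w.ge, ∃ (i : X ⟶ Q.obj Y) (r : Q.obj Y ⟶ X), i ≫ r = 𝟙 X} := by
  have hres' : ∀ M ∈ D, ∃ (B A : C) (f : B ⟶ M) (g : M ⟶ A) (h : A ⟶ B⟦(1 : ℤ)⟧),
      B ∈ D ∧ B ∈ w.le ∧ A⟦(-1 : ℤ)⟧ ∈ w.ge ∧ Triangle.mk f g h ∈ distTriang C := fun M hM => by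
    obtain ⟨B, A, f, g, h, hB, -, hT⟩ := hres M hM
    exact ⟨B, A, f, g, h, hB, hT⟩
  exact ⟨{
    le := karoubiClosureImage Q w.le
    ge := karoubiClosureImage Q w.ge
    le_zero := zero_mem_karoubiClosureImage w.le_zero
    ge_zero := zero_mem_karoubiClosureImage w.ge_zero
    le_retract := fun _ _ ⟨i, r, h⟩ => mem_karoubiClosureImage_of_retract ⟨i, r, h⟩
    ge_retract := fun _ _ ⟨i, r, h⟩ => mem_karoubiClosureImage_of_retract ⟨i, r, h⟩
    le_add := fun _ _ => biprod_mem_karoubiClosureImage w.le_add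
    ge_add := fun _ _ => biprod_mem_karoubiClosureImage w.ge_add
    le_shift := fun _ => shift_mem_karoubiClosureImage _ w.le_shift
    ge_shift := fun _ => shift_mem_karoubiClosureImage _ w.ge_shift
    orth := fun _ hX _ hY => eq_zero_of_mem_karoubiClosureImage _ (fun _ hA _ hB =>
      w.map_eq_zero_of_mem_le_of_mem_ge D (fun X hX => hDshift X hX 1) hres' Q hA hB) hX hY
    decomp := w.exists_distTriang_karoubiClosureImage Q }, rfl, rfl⟩
end

section
/- Let w be a weight structure on 𝒞, H : 𝒞^op → 𝒜 a contravariant functor to an abelian category, M an object of 𝒞, and m ∈ ℤ. Then the subobject (W^m H)(M) := Im(H(w_{≥m}M) → H(M)) of H(M) does not depend on the choice of the weight truncation w_{≥m}M, and M ↦ (W^m H)(M) is functorial in M. -/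
open CategoryTheory CategoryTheory.Limits CategoryTheory.Pretriangulated ZeroObject

universe v u v₂ u₂

variable {C : Type u} [Category.{v} C] [Preadditive C] [HasZeroObject C]
  [HasBinaryBiproducts C] [HasShift C ℤ] [∀ n : ℤ, (shiftFunctor C n).Additive]
  [Pretriangulated C]

section Aux

variable {C : Type u} [Category.{v} C] [Preadditive C] [HasZeroObject C]
  [HasBinaryBiproducts C] [HasShift C ℤ] [∀ n : ℤ, (shiftFunctor C n).Additive]
  [Pretriangulated C]

/-- Key step: a morphism `φ : M₁ ⟶ M₂` induces a morphism of weight truncations. -/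
lemma exists_desc_aux (w : WeightStructure C) (m : ℤ) {M₁ M₂ B₁ A₁ A₂ : C} (φ : M₁ ⟶ M₂)
    (f₁ : B₁ ⟶ M₁) (g₁ : M₁ ⟶ A₁) (δ₁ : A₁ ⟶ B₁⟦(1 : ℤ)⟧) (g₂ : M₂ ⟶ A₂)
    (hT₁ : Triangle.mk f₁ g₁ δ₁ ∈ distTriang C)
    (hB₁ : B₁⟦(1 - m : ℤ)⟧ ∈ w.le) (hA₂ : A₂⟦(-m : ℤ)⟧ ∈ w.ge) :
    ∃ a : A₁ ⟶ A₂, φ ≫ g₂ = g₁ ≫ a := by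
  have hk : f₁ ≫ (φ ≫ g₂) = 0 := by
    set k : B₁ ⟶ A₂ := f₁ ≫ φ ≫ g₂ with hkdef
    have h0 : (shiftFunctor C (1 - m : ℤ)).map k ≫
        (shiftFunctorAdd' C (-m : ℤ) (1 : ℤ) (1 - m : ℤ) (by ring)).hom.app A₂ = 0 :=
      w.orth _ hB₁ _ hA₂ _
    have h1 : (shiftFunctor C (1 - m : ℤ)).map k = 0 := zero_of_comp_mono _ h0
    have h2 : k = 0 := (shiftFunctor C (1 - m : ℤ)).map_injective
      (by rw [h1, Functor.map_zero])
    simpa [hkdef, Category.assoc] using h2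
  obtain ⟨a, ha⟩ := Triangle.yoneda_exact₂ _ hT₁ (φ ≫ g₂) hk
  exact ⟨a, ha⟩

end Aux

/-- The weight filtration of a contravariant functor `H : Cᵒᵖ ⥤ A`:
`(Wᵐ H)(M) = Im(H(w_{≥m} M) → H(M))` does not depend on the choice of the weight
truncation `w_{≥m} M` (taken from a weight decomposition
`w_{≤m−1}M → M → w_{≥m}M → [1]`), and is functorial in `M`. -/

theorem stmt19 {A : Type u₂} [Category.{v₂} A] [Abelian A]
    (w : WeightStructure C) (H : Cᵒᵖ ⥤ A) (m : ℤ) :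
    (∀ (M B₁ A₁ B₂ A₂ : C)
      (f₁ : B₁ ⟶ M) (g₁ : M ⟶ A₁) (δ₁ : A₁ ⟶ B₁⟦(1 : ℤ)⟧)
      (f₂ : B₂ ⟶ M) (g₂ : M ⟶ A₂) (δ₂ : A₂ ⟶ B₂⟦(1 : ℤ)⟧),
      (Triangle.mk f₁ g₁ δ₁ ∈ distTriang C) → (Triangle.mk f₂ g₂ δ₂ ∈ distTriang C) →
      B₁⟦(1 - m : ℤ)⟧ ∈ w.le → A₁⟦(-m : ℤ)⟧ ∈ w.ge →
      B₂⟦(1 - m : ℤ)⟧ ∈ w.le → A₂⟦(-m : ℤ)⟧ ∈ w.ge →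
      imageSubobject (H.map g₁.op) = imageSubobject (H.map g₂.op)) ∧
    (∀ (M₁ M₂ : C) (φ : M₁ ⟶ M₂) (B₁ A₁ B₂ A₂ : C)
      (f₁ : B₁ ⟶ M₁) (g₁ : M₁ ⟶ A₁) (δ₁ : A₁ ⟶ B₁⟦(1 : ℤ)⟧)
      (f₂ : B₂ ⟶ M₂) (g₂ : M₂ ⟶ A₂) (δ₂ : A₂ ⟶ B₂⟦(1 : ℤ)⟧),
      (Triangle.mk f₁ g₁ δ₁ ∈ distTriang C) → (Triangle.mk f₂ g₂ δ₂ ∈ distTriang C) →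
      B₁⟦(1 - m : ℤ)⟧ ∈ w.le → A₁⟦(-m : ℤ)⟧ ∈ w.ge →
      B₂⟦(1 - m : ℤ)⟧ ∈ w.le → A₂⟦(-m : ℤ)⟧ ∈ w.ge →
      ∃ u : (imageSubobject (H.map g₂.op) : A) ⟶ (imageSubobject (H.map g₁.op) : A),
        u ≫ (imageSubobject (H.map g₁.op)).arrow =
          (imageSubobject (H.map g₂.op)).arrow ≫ H.map φ.op) := by
  
  have key : ∀ {A' : Type u₂} [Category.{v₂} A'] [Abelian A'] (H : Cᵒᵖ ⥤ A')
      (M₁ M₂ : C) (φ : M₁ ⟶ M₂) (B₁ A₁ B₂ A₂ : C)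
      (f₁ : B₁ ⟶ M₁) (g₁ : M₁ ⟶ A₁) (δ₁ : A₁ ⟶ B₁⟦(1 : ℤ)⟧)
      (f₂ : B₂ ⟶ M₂) (g₂ : M₂ ⟶ A₂) (δ₂ : A₂ ⟶ B₂⟦(1 : ℤ)⟧),
      (Triangle.mk f₁ g₁ δ₁ ∈ distTriang C) → (Triangle.mk f₂ g₂ δ₂ ∈ distTriang C) →
      B₁⟦(1 - m : ℤ)⟧ ∈ w.le → A₂⟦(-m : ℤ)⟧ ∈ w.ge →
      ∃ u : (imageSubobject (H.map g₂.op) : A') ⟶ (imageSubobject (H.map g₁.op) : A'),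
        u ≫ (imageSubobject (H.map g₁.op)).arrow =
          (imageSubobject (H.map g₂.op)).arrow ≫ H.map φ.op := by
    intro A' _ _ H M₁ M₂ φ B₁ A₁ B₂ A₂ f₁ g₁ δ₁ f₂ g₂ δ₂ hT₁ hT₂ hB₁ hA₂
    obtain ⟨a, ha⟩ := exists_desc_aux w m φ f₁ g₁ δ₁ g₂ hT₁ hB₁ hA₂
    have hH : H.map g₂.op ≫ H.map φ.op = H.map a.op ≫ H.map g₁.op := by
      rw [← H.map_comp, ← H.map_comp, ← op_comp, ← op_comp, ha]
    haveI := strongEpi_of_epi (factorThruImageSubobject (H.map g₂.op))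
    have sq : CommSq (H.map a.op ≫ factorThruImageSubobject (H.map g₁.op))
        (factorThruImageSubobject (H.map g₂.op))
        (imageSubobject (H.map g₁.op)).arrow
        ((imageSubobject (H.map g₂.op)).arrow ≫ H.map φ.op) := ⟨by
      simp only [Category.assoc, imageSubobject_arrow_comp,
        imageSubobject_arrow_comp_assoc]
      exact hH.symm⟩
    exact ⟨sq.lift, sq.fac_right⟩
  constructor
  · intro M B₁ A₁ B₂ A₂ f₁ g₁ δ₁ f₂ g₂ δ₂ hT₁ hT₂ hB₁ hA₁ hB₂ hA₂
    obtain ⟨a, ha⟩ := exists_desc_aux w m (𝟙 M) f₁ g₁ δ₁ g₂ hT₁ hB₁ hA₂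
    obtain ⟨b, hb⟩ := exists_desc_aux w m (𝟙 M) f₂ g₂ δ₂ g₁ hT₂ hB₂ hA₁
    rw [Category.id_comp] at ha hb
    apply le_antisymm
    · have : H.map g₁.op = H.map b.op ≫ H.map g₂.op := by
        rw [← H.map_comp, ← op_comp, ← hb]
      rw [this]
      exact imageSubobject_comp_le _ _
    · have : H.map g₂.op = H.map a.op ≫ H.map g₁.op := by
        rw [← H.map_comp, ← op_comp, ← ha]
      rw [this]
      exact imageSubobject_comp_le _ _
  · intro M₁ M₂ φ B₁ A₁ B₂ A₂ f₁ g₁ δ₁ f₂ g₂ δ₂ hT₁ hT₂ hB₁ hA₁ hB₂ hA₂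
    exact key H M₁ M₂ φ B₁ A₁ B₂ A₂ f₁ g₁ δ₁ f₂ g₂ δ₂ hT₁ hT₂ hB₁ hA₂
end
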